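/- For v ∈ ℂ^m ⊗ ℂ^n with Schmidt coefficients α₁ ≥ α₂ ≥ ⋯ ≥ 0 (singular values of the associated matrix A_v), the quantity ‖v‖_{s(k)} := sup{ |⟨w, v⟩| : ‖w‖ = 1, SR(w) ≤ k } equals sqrt(α₁² + ⋯ + α_k²). -/

import Mathlib

noncomputable section

/-- The elementary tensor `a ⊗ b` in `ℂ^m ⊗ ℂ^n ≅ ℂ^(m×n)`. -/
def tens {m n : ℕ} (a : EuclideanSpace ℂ (Fin m)) (b : EuclideanSpace ℂ (Fin n)) :
    EuclideanSpace ℂ (Fin m × Fin n) :=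
  WithLp.toLp 2 (fun p : Fin m × Fin n => a p.1 * b p.2)

/-- The Schmidt rank of `v ∈ ℂ^m ⊗ ℂ^n`. -/
def SR {m n : ℕ} (v : EuclideanSpace ℂ (Fin m × Fin n)) : ℕ :=
  sInf {k | ∃ (a : Fin k → EuclideanSpace ℂ (Fin m)) (b : Fin k → EuclideanSpace ℂ (Fin n)),
    v = ∑ i, tens (a i) (b i)}

/-!
Write a unit vector `w` with `SR w ≤ k` as `∑_{l<d} u_l ⊗ z_l` with `d ≤ k` and `u` orthonormal.
Then `⟪w, v⟫ = ⟪w, v'⟫` for the projection `v'` of `v = ∑ αᵢ aᵢ ⊗ bᵢ` onto `span u ⊗ ℂⁿ`, and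
Cauchy–Schwarz gives `|⟪w, v⟫|² ≤ ‖v'‖² = ∑ αᵢ² tᵢ` with `tᵢ = ∑_l |⟪u_l, aᵢ⟫|²`. By Bessel's
inequality `0 ≤ tᵢ ≤ 1` and `∑ tᵢ ≤ d ≤ k`, and under these constraints `∑ αᵢ² tᵢ` is largest when
all the weight sits on the `k` largest coefficients. The normalised truncation
`∑_{i<k} αᵢ aᵢ ⊗ bᵢ` attains the bound.
-/

open scoped Finset InnerProductSpace

lemma sum_mul_le_sum_lt_of_antitone {N k : ℕ} (hk : 0 < k) (hkN : k ≤ N) {A t : Fin N → ℝ}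
    (hA : Antitone A) (hA0 : ∀ i, 0 ≤ A i) (ht0 : ∀ i, 0 ≤ t i) (ht1 : ∀ i, t i ≤ 1)
    (ht : ∑ i, t i ≤ k) :
    ∑ i : Fin N, A i * t i ≤ ∑ i : Fin N, if (i : ℕ) < k then A i else 0 := by
  set κ : Fin N := ⟨k - 1, by omega⟩
  -- `A κ` separates the `k` largest values of `A` from the others
  have hterm (i : Fin N) : A i * t i ≤
      (if (i : ℕ) < k then A i else 0) + A κ * (t i - if (i : ℕ) < k then 1 else 0) := by
    split_ifs with hi
    · have : A κ ≤ A i := hA (Fin.le_iff_val_le_val.2 (by simp only [κ]; omega))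
      nlinarith [ht1 i]
    · have : A i ≤ A κ := hA (Fin.le_iff_val_le_val.2 (by simp only [κ]; omega))
      nlinarith [ht0 i]
  have hcard : ∑ i : Fin N, (if (i : ℕ) < k then (1 : ℝ) else 0) = k := by
    rw [Finset.sum_boole, Fin.card_filter_val_lt, min_eq_right hkN]
  calc ∑ i : Fin N, A i * t i
      ≤ ∑ i : Fin N,
          ((if (i : ℕ) < k then A i else 0) + A κ * (t i - if (i : ℕ) < k then 1 else 0)) :=
        Finset.sum_le_sum fun i _ => hterm i
    _ = (∑ i : Fin N, if (i : ℕ) < k then A i else 0) + A κ * (∑ i, t i - k) := by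
        rw [Finset.sum_add_distrib, ← Finset.mul_sum, Finset.sum_sub_distrib, hcard]
    _ ≤ ∑ i : Fin N, if (i : ℕ) < k then A i else 0 :=
        add_le_of_nonpos_right (mul_nonpos_of_nonneg_of_nonpos (hA0 κ) (by linarith))

lemma Orthonormal.norm_sq_sum_smul {E ι : Type*} [NormedAddCommGroup E] [InnerProductSpace ℂ E]
    [Fintype ι] {b : ι → E} (hb : Orthonormal ℂ b) (c : ι → ℂ) :
    ‖∑ i, c i • b i‖ ^ 2 = ∑ i, ‖c i‖ ^ 2 := by
  have h := hb.inner_sum c c Finset.univ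
  simp only [inner_self_eq_norm_sq_to_K, RCLike.conj_mul] at h
  exact_mod_cast h

section Tens

variable {m n : ℕ} {ι : Type*}

@[simp]
lemma tens_apply (a : EuclideanSpace ℂ (Fin m)) (b : EuclideanSpace ℂ (Fin n)) (p : Fin m × Fin n) :
    tens a b p = a p.1 * b p.2 := rfl

@[simp]
lemma tens_zero_left (b : EuclideanSpace ℂ (Fin n)) :
    tens (0 : EuclideanSpace ℂ (Fin m)) b = 0 := by
  ext p; simp

lemma tens_smul_left (c : ℂ) (a : EuclideanSpace ℂ (Fin m)) (b : EuclideanSpace ℂ (Fin n)) :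
    tens (c • a) b = c • tens a b := by
  ext p; simp [mul_assoc]

lemma tens_smul_right (c : ℂ) (a : EuclideanSpace ℂ (Fin m)) (b : EuclideanSpace ℂ (Fin n)) :
    tens a (c • b) = c • tens a b := by
  ext p; simp [mul_left_comm]

lemma tens_sum_left (s : Finset ι) (f : ι → EuclideanSpace ℂ (Fin m))
    (b : EuclideanSpace ℂ (Fin n)) : tens (∑ i ∈ s, f i) b = ∑ i ∈ s, tens (f i) b := by
  ext p; simp [WithLp.ofLp_sum, Finset.sum_mul]

lemma tens_sum_right (s : Finset ι) (a : EuclideanSpace ℂ (Fin m))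
    (f : ι → EuclideanSpace ℂ (Fin n)) : tens a (∑ i ∈ s, f i) = ∑ i ∈ s, tens a (f i) := by
  ext p; simp [WithLp.ofLp_sum, Finset.mul_sum]

lemma inner_tens (u a : EuclideanSpace ℂ (Fin m)) (z b : EuclideanSpace ℂ (Fin n)) :
    ⟪tens u z, tens a b⟫_ℂ = ⟪u, a⟫_ℂ * ⟪z, b⟫_ℂ := by
  simp only [PiLp.inner_apply, RCLike.inner_apply, tens_apply, Fintype.sum_prod_type,
    Finset.sum_mul_sum, map_mul]
  exact Finset.sum_congr rfl fun i _ => Finset.sum_congr rfl fun j _ => by ring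

end Tens

section SchmidtRank

variable {m n : ℕ}

def IsSumOfTens (k : ℕ) (w : EuclideanSpace ℂ (Fin m × Fin n)) : Prop :=
  ∃ (a : Fin k → EuclideanSpace ℂ (Fin m)) (b : Fin k → EuclideanSpace ℂ (Fin n)),
    w = ∑ i, tens (a i) (b i)

lemma IsSumOfTens.succ {k : ℕ} {w : EuclideanSpace ℂ (Fin m × Fin n)} (h : IsSumOfTens k w) :
    IsSumOfTens (k + 1) w := by
  obtain ⟨a, b, rfl⟩ := h
  exact ⟨Fin.snoc a 0, Fin.snoc b 0, by simp [Fin.sum_univ_castSucc]⟩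

lemma IsSumOfTens.mono {K k : ℕ} {w : EuclideanSpace ℂ (Fin m × Fin n)} (h : IsSumOfTens K w)
    (hK : K ≤ k) : IsSumOfTens k w := by
  induction k, hK using Nat.le_induction with
  | base => exact h
  | succ k _ ih => exact ih.succ

lemma isSumOfTens_finset_sum {ι : Type*} (s : Finset ι) (a : ι → EuclideanSpace ℂ (Fin m))
    (b : ι → EuclideanSpace ℂ (Fin n)) : IsSumOfTens #s (∑ i ∈ s, tens (a i) (b i)) :=
  ⟨fun j => a (s.equivFin.symm j), fun j => b (s.equivFin.symm j), by
    rw [← Finset.sum_coe_sort s, ← s.equivFin.symm.sum_comp]⟩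

lemma isSumOfTens_rows (w : EuclideanSpace ℂ (Fin m × Fin n)) : IsSumOfTens m w := by
  refine ⟨fun i => EuclideanSpace.single i 1, fun i => WithLp.toLp 2 fun j => w (i, j), ?_⟩
  ext p
  simp [WithLp.ofLp_sum]

lemma SR_le_iff {k : ℕ} {w : EuclideanSpace ℂ (Fin m × Fin n)} : SR w ≤ k ↔ IsSumOfTens k w :=
  ⟨fun h => (Nat.sInf_mem (s := {k | IsSumOfTens k w}) ⟨m, isSumOfTens_rows w⟩).mono h,
    fun h => Nat.sInf_le h⟩

end SchmidtRank

section Orthonormal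

variable {m n : ℕ} {ι : Type*}

lemma inner_sum_tens_of_orthonormal [Fintype ι] {u : ι → EuclideanSpace ℂ (Fin m)}
    (hu : Orthonormal ℂ u) (z y : ι → EuclideanSpace ℂ (Fin n)) :
    ⟪∑ i, tens (u i) (z i), ∑ i, tens (u i) (y i)⟫_ℂ = ∑ i, ⟪z i, y i⟫_ℂ := by
  classical
  simp [inner_tens, orthonormal_iff_ite.mp hu]

lemma norm_sq_sum_tens_of_orthonormal [Fintype ι] {u : ι → EuclideanSpace ℂ (Fin m)}
    (hu : Orthonormal ℂ u) (z : ι → EuclideanSpace ℂ (Fin n)) :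
    ‖∑ i, tens (u i) (z i)‖ ^ 2 = ∑ i, ‖z i‖ ^ 2 := by
  have h := inner_sum_tens_of_orthonormal hu z z
  simp only [inner_self_eq_norm_sq_to_K] at h
  exact_mod_cast h

lemma Orthonormal.tens {a : ι → EuclideanSpace ℂ (Fin m)} {b : ι → EuclideanSpace ℂ (Fin n)}
    (ha : Orthonormal ℂ a) (hb : Orthonormal ℂ b) : Orthonormal ℂ fun i => tens (a i) (b i) := by
  classical
  rw [orthonormal_iff_ite] at ha hb ⊢
  intro i j
  rw [inner_tens, ha, hb]
  split_ifs <;> simp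

lemma IsSumOfTens.exists_orthonormal {k : ℕ} {w : EuclideanSpace ℂ (Fin m × Fin n)}
    (h : IsSumOfTens k w) : ∃ d ≤ k, ∃ (u : Fin d → EuclideanSpace ℂ (Fin m))
      (z : Fin d → EuclideanSpace ℂ (Fin n)), Orthonormal ℂ u ∧ w = ∑ l, tens (u l) (z l) := by
  obtain ⟨x, y, rfl⟩ := h
  set U := Submodule.span ℂ (Set.range x)
  let o := stdOrthonormalBasis ℂ U
  have hmem (j : Fin k) : x j ∈ U := Submodule.subset_span ⟨j, rfl⟩
  let c (j : Fin k) : Fin (Module.finrank ℂ U) → ℂ := o.repr ⟨x j, hmem j⟩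
  have hx (j : Fin k) : x j = ∑ l, c j l • (o l : EuclideanSpace ℂ (Fin m)) := by
    simpa using congrArg Subtype.val (o.sum_repr ⟨x j, hmem j⟩).symm
  refine ⟨Module.finrank ℂ U, (finrank_range_le_card x).trans_eq (Fintype.card_fin k),
    fun l => o l, fun l => ∑ j, c j l • y j, o.orthonormal.comp_linearIsometry U.subtypeₗᵢ, ?_⟩
  simp_rw [hx, tens_sum_left, tens_sum_right, tens_smul_left, tens_smul_right]
  exact Finset.sum_comm

lemma norm_inner_sum_tens_le {κ : Type*} [Fintype ι] [Fintype κ]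
    {u : κ → EuclideanSpace ℂ (Fin m)} (hu : Orthonormal ℂ u) (z : κ → EuclideanSpace ℂ (Fin n))
    (a : ι → EuclideanSpace ℂ (Fin m)) {b : ι → EuclideanSpace ℂ (Fin n)} (hb : Orthonormal ℂ b)
    (c : ι → ℂ) :
    ‖⟪∑ l, tens (u l) (z l), ∑ i, c i • tens (a i) (b i)⟫_ℂ‖ ≤
      ‖∑ l, tens (u l) (z l)‖ * √(∑ i, ‖c i‖ ^ 2 * ∑ l, ‖⟪u l, a i⟫_ℂ‖ ^ 2) := by
  set w := ∑ l, tens (u l) (z l)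
  -- `v'` is the image of the second vector under the orthogonal projection onto `span u ⊗ ℂⁿ`
  set g : κ → EuclideanSpace ℂ (Fin n) := fun l => ∑ i, (c i * ⟪u l, a i⟫_ℂ) • b i
  set v' := ∑ l, tens (u l) (g l)
  have hinner : ⟪w, ∑ i, c i • tens (a i) (b i)⟫_ℂ = ⟪w, v'⟫_ℂ := by
    simp only [w, v', inner_sum_tens_of_orthonormal hu, g, sum_inner, inner_sum, inner_smul_right,
      inner_tens, Finset.mul_sum]
    rw [Finset.sum_comm]
    exact Finset.sum_congr rfl fun _ _ => Finset.sum_congr rfl fun _ _ => by ring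
  have hv' : ‖v'‖ ^ 2 = ∑ i, ‖c i‖ ^ 2 * ∑ l, ‖⟪u l, a i⟫_ℂ‖ ^ 2 := by
    simp only [v', norm_sq_sum_tens_of_orthonormal hu, g, hb.norm_sq_sum_smul, norm_mul, mul_pow,
      Finset.mul_sum]
    exact Finset.sum_comm
  calc ‖⟪w, ∑ i, c i • tens (a i) (b i)⟫_ℂ‖ = ‖⟪w, v'⟫_ℂ‖ := by rw [hinner]
    _ ≤ ‖w‖ * ‖v'‖ := norm_inner_le_norm _ _
    _ = ‖w‖ * √(∑ i, ‖c i‖ ^ 2 * ∑ l, ‖⟪u l, a i⟫_ℂ‖ ^ 2) := by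
        rw [← hv', Real.sqrt_sq (norm_nonneg _)]

section SchmidtDecomposition

variable {m n N k : ℕ} {α : Fin N → ℝ} {a : Fin N → EuclideanSpace ℂ (Fin m)}
  {b : Fin N → EuclideanSpace ℂ (Fin n)}

lemma norm_inner_schmidt_le (hk : 0 < k) (hkN : k ≤ N) (ha : Orthonormal ℂ a)
    (hb : Orthonormal ℂ b) (hα0 : ∀ i, 0 ≤ α i) (hα : Antitone α)
    {w : EuclideanSpace ℂ (Fin m × Fin n)} (hw : ‖w‖ = 1) (hwk : IsSumOfTens k w) :
    ‖⟪w, ∑ i, (α i : ℂ) • tens (a i) (b i)⟫_ℂ‖ ≤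
      √(∑ i : Fin N, if (i : ℕ) < k then α i ^ 2 else 0) := by
  obtain ⟨d, hdk, u, z, hu, rfl⟩ := hwk.exists_orthonormal
  set t : Fin N → ℝ := fun i => ∑ l, ‖⟪u l, a i⟫_ℂ‖ ^ 2
  have ht1 (i : Fin N) : t i ≤ 1 := by
    simpa [ha.1 i] using hu.sum_inner_products_le (a i) (s := Finset.univ)
  have ht : ∑ i, t i ≤ k :=
    calc ∑ i, t i = ∑ l, ∑ i, ‖⟪a i, u l⟫_ℂ‖ ^ 2 := by
          simp only [t, norm_inner_symm (u _)]
          exact Finset.sum_comm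
      _ ≤ ∑ _l : Fin d, 1 := Finset.sum_le_sum fun l _ => by
          simpa [hu.1 l] using ha.sum_inner_products_le (u l) (s := Finset.univ)
      _ ≤ k := by simpa using hdk
  calc ‖⟪∑ l, tens (u l) (z l), ∑ i, (α i : ℂ) • tens (a i) (b i)⟫_ℂ‖
      ≤ √(∑ i, ‖(α i : ℂ)‖ ^ 2 * t i) := by
        simpa [hw] using norm_inner_sum_tens_le hu z a hb (fun i => (α i : ℂ))
    _ = √(∑ i, α i ^ 2 * t i) := by simp
    _ ≤ √(∑ i : Fin N, if (i : ℕ) < k then α i ^ 2 else 0) :=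
        Real.sqrt_le_sqrt <| sum_mul_le_sum_lt_of_antitone hk hkN
          (fun i j hij => pow_le_pow_left₀ (hα0 j) (hα hij) 2) (fun i => sq_nonneg _)
          (fun i => by positivity) ht1 ht

lemma isSumOfTens_sum_lt (hkN : k ≤ N) (c : Fin N → ℂ) :
    IsSumOfTens k (∑ i : Fin N, if (i : ℕ) < k then c i • tens (a i) (b i) else 0) := by
  rw [← Finset.sum_filter]
  simp_rw [← tens_smul_left]
  convert isSumOfTens_finset_sum _ _ b
  rw [Fin.card_filter_val_lt, min_eq_right hkN]

lemma exists_norm_inner_schmidt_eq (hk : 0 < k) (hkN : k ≤ N) (ha : Orthonormal ℂ a)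
    (hb : Orthonormal ℂ b) (hα0 : ∀ i, 0 ≤ α i) (hα : Antitone α) :
    ∃ w : EuclideanSpace ℂ (Fin m × Fin n), ‖w‖ = 1 ∧ IsSumOfTens k w ∧
      ‖⟪w, ∑ i, (α i : ℂ) • tens (a i) (b i)⟫_ℂ‖ =
        √(∑ i : Fin N, if (i : ℕ) < k then α i ^ 2 else 0) := by
  set S := √(∑ i : Fin N, if (i : ℕ) < k then α i ^ 2 else 0)
  have hT := ha.tens hb
  by_cases hS : S = 0
  · -- any unit vector of Schmidt rank one will do, by the upper bound
    let i₀ : Fin N := ⟨0, hk.trans_le hkN⟩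
    have hw : IsSumOfTens k (tens (a i₀) (b i₀)) :=
      IsSumOfTens.mono ⟨fun _ => a i₀, fun _ => b i₀, by simp⟩ hk
    refine ⟨_, hT.1 i₀, hw, le_antisymm ?_ (hS ▸ norm_nonneg _)⟩
    exact norm_inner_schmidt_le hk hkN ha hb hα0 hα (hT.1 i₀) hw
  · have hS0 : 0 < S := (Real.sqrt_nonneg _).lt_of_ne' hS
    have hSsq : S ^ 2 = ∑ i : Fin N, if (i : ℕ) < k then α i ^ 2 else 0 :=
      Real.sq_sqrt (Finset.sum_nonneg fun i _ => by positivity)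
    set c : Fin N → ℝ := fun i => if (i : ℕ) < k then α i / S else 0
    have hc_sq : ∑ i, c i ^ 2 = 1 := by
      rw [← div_self (pow_ne_zero 2 hS), hSsq, Finset.sum_div]
      refine Finset.sum_congr rfl fun i _ => ?_
      split_ifs <;> simp [c, *, div_pow]
    have hc_mul : ∑ i, c i * α i = S := by
      rw [← mul_div_cancel_right₀ S hS, ← sq, hSsq, Finset.sum_div]
      refine Finset.sum_congr rfl fun i _ => ?_
      split_ifs <;> simp [c, *, div_mul_eq_mul_div, sq]
    refine ⟨∑ i, (c i : ℂ) • tens (a i) (b i), ?_, ?_, ?_⟩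
    · rw [← pow_eq_one_iff_of_nonneg (norm_nonneg _) two_ne_zero, hT.norm_sq_sum_smul]
      simpa using hc_sq
    · convert isSumOfTens_sum_lt (a := a) (b := b) hkN (fun i => ((α i / S : ℝ) : ℂ)) using 2
      simp only [c, apply_ite (fun r : ℝ => (r : ℂ)), ite_smul, Complex.ofReal_zero, zero_smul]
    · rw [hT.inner_sum]
      simp_rw [Complex.conj_ofReal, ← Complex.ofReal_mul, ← Complex.ofReal_sum, hc_mul]
      simp [hS0.le]

end SchmidtDecomposition

theorem stmt8 {m n k : ℕ} (hk1 : 1 ≤ k) (hk2 : k ≤ min m n)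
    (v : EuclideanSpace ℂ (Fin m × Fin n))
    (α : Fin (min m n) → ℝ)
    (a : Fin (min m n) → EuclideanSpace ℂ (Fin m))
    (b : Fin (min m n) → EuclideanSpace ℂ (Fin n))
    (ha : Orthonormal ℂ a) (hb : Orthonormal ℂ b)
    (hαpos : ∀ i, 0 ≤ α i) (hαdec : ∀ i j, i ≤ j → α j ≤ α i)
    (hv : v = ∑ i, (α i : ℂ) • tens (a i) (b i)) :
    sSup {x : ℝ | ∃ w : EuclideanSpace ℂ (Fin m × Fin n),
        ‖w‖ = 1 ∧ SR w ≤ k ∧ x = ‖(inner ℂ w v : ℂ)‖} =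
      Real.sqrt (∑ i : Fin (min m n), if (i : ℕ) < k then α i ^ 2 else 0) := by
  have hα : Antitone α := fun i j => hαdec i j
  subst hv
  refine IsGreatest.csSup_eq ⟨?_, ?_⟩
  · obtain ⟨w, hw, hwk, hwv⟩ := exists_norm_inner_schmidt_eq hk1 hk2 ha hb hαpos hα
    exact ⟨w, hw, SR_le_iff.2 hwk, hwv.symm⟩
  · rintro _ ⟨w, hw, hwk, rfl⟩
    exact norm_inner_schmidt_le hk1 hk2 ha hb hαpos hα hw (SR_le_iff.1 hwk)
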